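/- The Z-module M = Z₉ × Z₄ is not an S-2-absorbing second module for S = (Z \ 3Z) × (Z \ 2Z) as a multiplicatively closed subset of Z × Z, even though Z₉ is (Z \ 3Z)-2-absorbing second and Z₄ is (Z \ 2Z)-2-absorbing second. Specifically, (1,2)(3,1)M ⊆ 3Z₉ × 2Z₄, but for every s = (s₁,s₂) ∈ S: s(3,1)M ⊄ 3Z₉ × 2Z₄, s(1,2)M ⊄ 3Z₉ × 2Z₄, and s(1,2)(3,1)M ≠ 0. -/
import Mathlib


open Pointwise

/-- `S` is a multiplicatively closed subset of `R`: `0 ∉ S`, `1 ∈ S`, closed under products. -/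
def IsMCS {R : Type*} [CommRing R] (S : Set R) : Prop :=
  (0 : R) ∉ S ∧ (1 : R) ∈ S ∧ ∀ s ∈ S, ∀ t ∈ S, s * t ∈ S

/-- `N` is an `S`-2-absorbing submodule of `M`. -/
def IsS2AbsorbingSubmodule {R M : Type*} [CommRing R] [AddCommGroup M] [Module R M]
    (S : Set R) (N : Submodule R M) : Prop :=
  (∀ s ∈ S, s ∉ N.colon ⊤) ∧
  ∃ s ∈ S, ∀ a b : R, ∀ m : M, (a * b) • m ∈ N →
    s * (a * b) ∈ N.colon ⊤ ∨ (s * a) • m ∈ N ∨ (s * b) • m ∈ N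

/-- `I` is an `S`-2-absorbing ideal of `R`. -/
def IsS2AbsorbingIdeal {R : Type*} [CommRing R] (S : Set R) (I : Ideal R) : Prop :=
  (∀ s ∈ S, s ∉ I) ∧
  ∃ s ∈ S, ∀ a b c : R, a * b * c ∈ I →
    s * (a * b) ∈ I ∨ s * (a * c) ∈ I ∨ s * (b * c) ∈ I

/-- `N` is an `S`-2-absorbing second submodule of `M`. -/
def IsS2AbsorbingSecond {R M : Type*} [CommRing R] [AddCommGroup M] [Module R M]
    (S : Set R) (N : Submodule R M) : Prop :=
  (∀ s ∈ S, s ∉ N.annihilator) ∧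
  ∃ s ∈ S, ∀ a b : R, ∀ K : Submodule R M, (a * b) • N ≤ K →
    (s * a) • N ≤ K ∨ (s * b) • N ≤ K ∨ (s * (a * b)) • N = ⊥

/-- `N` is an `S`-second submodule of `M`. -/
def IsSSecond {R M : Type*} [CommRing R] [AddCommGroup M] [Module R M]
    (S : Set R) (N : Submodule R M) : Prop :=
  (∀ s ∈ S, s ∉ N.annihilator) ∧
  ∃ s ∈ S, ∀ r : R, ∀ K : Submodule R M, r • N ≤ K →
    (r * s) • N = ⊥ ∨ s • N ≤ K

/-- `N` is a strongly 2-absorbing second submodule of `M`. -/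
def IsStrongly2AbsorbingSecond {R M : Type*} [CommRing R] [AddCommGroup M] [Module R M]
    (N : Submodule R M) : Prop :=
  N ≠ ⊥ ∧ ∀ a b : R, ∀ K : Submodule R M, (a * b) • N ≤ K →
    a • N ≤ K ∨ b • N ≤ K ∨ (a * b) • N = ⊥


/-- `ℤ × ℤ` acts on `ZMod 9` through the first projection. -/
instance : Module (ℤ × ℤ) (ZMod 9) := Module.compHom _ (RingHom.fst ℤ ℤ)

/-- `ℤ × ℤ` acts on `ZMod 4` through the second projection. -/
instance : Module (ℤ × ℤ) (ZMod 4) := Module.compHom _ (RingHom.snd ℤ ℤ)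

instance : SMulCommClass (ℤ × ℤ) (ℤ × ℤ) (ZMod 9) :=
  ⟨fun r s m => smul_comm r.1 s.1 m⟩

instance : SMulCommClass (ℤ × ℤ) (ℤ × ℤ) (ZMod 4) :=
  ⟨fun r s m => smul_comm r.2 s.2 m⟩

/-- The submodule `N₁ × N₂` of the `ℤ × ℤ`-module `ZMod 9 × ZMod 4`. -/
def prodSub (N1 : Submodule ℤ (ZMod 9)) (N2 : Submodule ℤ (ZMod 4)) :
    Submodule (ℤ × ℤ) (ZMod 9 × ZMod 4) where
  carrier := {x | x.1 ∈ N1 ∧ x.2 ∈ N2}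
  add_mem' hx hy := ⟨N1.add_mem hx.1 hy.1, N2.add_mem hx.2 hy.2⟩
  zero_mem' := ⟨N1.zero_mem, N2.zero_mem⟩
  smul_mem' r x hx := ⟨N1.smul_mem r.1 hx.1, N2.smul_mem r.2 hx.2⟩

section Helpers

variable {R M : Type*} [CommRing R] [AddCommGroup M] [Module R M] [SMulCommClass R R M]

lemma smul_top_le_iff' (a : R) (m₀ : M) (hgen : ∀ x : M, ∃ r : R, x = r • m₀)
    (K : Submodule R M) : a • (⊤ : Submodule R M) ≤ K ↔ a • m₀ ∈ K := by
  constructor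
  · intro h
    exact h (Submodule.smul_mem_pointwise_smul m₀ a ⊤ trivial)
  · intro h x hx
    obtain ⟨y, -, rfl⟩ := Set.mem_smul_set.mp
      (by rwa [← SetLike.mem_coe, Submodule.coe_pointwise_smul] at hx)
    obtain ⟨r, rfl⟩ := hgen y
    rw [smul_comm]
    exact K.smul_mem r h

lemma smul_top_eq_bot_iff' (a : R) (m₀ : M) (hgen : ∀ x : M, ∃ r : R, x = r • m₀) :
    a • (⊤ : Submodule R M) = ⊥ ↔ a • m₀ = 0 := by
  rw [← le_bot_iff, smul_top_le_iff' a m₀ hgen, Submodule.mem_bot]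

end Helpers

lemma inv_mod_nine (a : ℤ) (ha : ¬ (3:ℤ) ∣ a) : ∃ c : ℤ, ((c * a : ℤ) : ZMod 9) = 1 := by
  have h : IsCoprime a (9:ℤ) := by
    have h1 := (Int.prime_three.coprime_iff_not_dvd.mpr ha).symm
    have h2 : (9:ℤ) = 3^2 := by norm_num
    rw [h2]; exact h1.pow_right
  obtain ⟨u, v, huv⟩ := h
  refine ⟨u, ?_⟩
  have h1 : ((u*a + v*9 : ℤ) : ZMod 9) = 1 := by rw [huv]; norm_num
  push_cast at h1 ⊢
  have h9 : (9 : ZMod 9) = 0 := by decide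
  rw [h9, mul_zero, add_zero] at h1; exact h1

lemma inv_mod_four (a : ℤ) (ha : ¬ (2:ℤ) ∣ a) : ∃ c : ℤ, ((c * a : ℤ) : ZMod 4) = 1 := by
  have h : IsCoprime a (4:ℤ) := by
    have h1 := (Int.prime_two.coprime_iff_not_dvd.mpr ha).symm
    have h2 : (4:ℤ) = 2^2 := by norm_num
    rw [h2]; exact h1.pow_right
  obtain ⟨u, v, huv⟩ := h
  refine ⟨u, ?_⟩
  have h1 : ((u*a + v*4 : ℤ) : ZMod 4) = 1 := by rw [huv]; norm_num
  push_cast at h1 ⊢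
  have h4 : (4 : ZMod 4) = 0 := by decide
  rw [h4, mul_zero, add_zero] at h1; exact h1

lemma gen9 : ∀ x : ZMod 9, ∃ r : ℤ, x = r • (1 : ZMod 9) :=
  fun x => ⟨x.val, by simp [zsmul_eq_mul, ZMod.natCast_val]⟩

lemma gen4 : ∀ x : ZMod 4, ∃ r : ℤ, x = r • (1 : ZMod 4) :=
  fun x => ⟨x.val, by simp [zsmul_eq_mul, ZMod.natCast_val]⟩

lemma smul_one9 (n : ℤ) : n • (1 : ZMod 9) = (n : ZMod 9) := by
  rw [zsmul_eq_mul, mul_one]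

lemma smul_one4 (n : ℤ) : n • (1 : ZMod 4) = (n : ZMod 4) := by
  rw [zsmul_eq_mul, mul_one]

lemma zmod9_second : IsS2AbsorbingSecond {n : ℤ | ¬ (3 ∣ n)} (⊤ : Submodule ℤ (ZMod 9)) := by
  constructor
  · intro s hs hmem
    rw [Submodule.mem_annihilator] at hmem
    have h1 := hmem 1 trivial
    rw [smul_one9] at h1
    exact hs (dvd_trans ⟨3, by norm_num⟩ ((ZMod.intCast_zmod_eq_zero_iff_dvd s 9).mp h1))
  · refine ⟨1, by norm_num, ?_⟩
    intro a b K h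
    rw [smul_top_le_iff' _ 1 gen9] at h
    by_cases ha : (3:ℤ) ∣ a
    · by_cases hb : (3:ℤ) ∣ b
      · right; right
        rw [smul_top_eq_bot_iff' _ 1 gen9, smul_one9]
        rw [ZMod.intCast_zmod_eq_zero_iff_dvd]
        obtain ⟨a', rfl⟩ := ha; obtain ⟨b', rfl⟩ := hb
        exact ⟨a'*b', by ring⟩
      · left
        rw [smul_top_le_iff' _ 1 gen9]
        obtain ⟨c, hc⟩ := inv_mod_nine b hb
        rw [smul_one9] at h
        have h2 := K.smul_mem c h
        rw [smul_one9]
        have key : ((1 * a : ℤ) : ZMod 9) = c • ((a * b : ℤ) : ZMod 9) := by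
          rw [zsmul_eq_mul]
          push_cast at hc ⊢
          linear_combination (-(a : ZMod 9)) * hc
        rw [key]; exact h2
    · right; left
      rw [smul_top_le_iff' _ 1 gen9]
      obtain ⟨c, hc⟩ := inv_mod_nine a ha
      rw [smul_one9] at h
      have h2 := K.smul_mem c h
      rw [smul_one9]
      have key : ((1 * b : ℤ) : ZMod 9) = c • ((a * b : ℤ) : ZMod 9) := by
        rw [zsmul_eq_mul]
        push_cast at hc ⊢
        linear_combination (-(b : ZMod 9)) * hc
      rw [key]; exact h2

lemma zmod4_second : IsS2AbsorbingSecond {n : ℤ | ¬ (2 ∣ n)} (⊤ : Submodule ℤ (ZMod 4)) := by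
  constructor
  · intro s hs hmem
    rw [Submodule.mem_annihilator] at hmem
    have h1 := hmem 1 trivial
    rw [smul_one4] at h1
    exact hs (dvd_trans ⟨2, by norm_num⟩ ((ZMod.intCast_zmod_eq_zero_iff_dvd s 4).mp h1))
  · refine ⟨1, by norm_num, ?_⟩
    intro a b K h
    rw [smul_top_le_iff' _ 1 gen4] at h
    by_cases ha : (2:ℤ) ∣ a
    · by_cases hb : (2:ℤ) ∣ b
      · right; right
        rw [smul_top_eq_bot_iff' _ 1 gen4, smul_one4]
        rw [ZMod.intCast_zmod_eq_zero_iff_dvd]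
        obtain ⟨a', rfl⟩ := ha; obtain ⟨b', rfl⟩ := hb
        exact ⟨a'*b', by ring⟩
      · left
        rw [smul_top_le_iff' _ 1 gen4]
        obtain ⟨c, hc⟩ := inv_mod_four b hb
        rw [smul_one4] at h
        have h2 := K.smul_mem c h
        rw [smul_one4]
        have key : ((1 * a : ℤ) : ZMod 4) = c • ((a * b : ℤ) : ZMod 4) := by
          rw [zsmul_eq_mul]
          push_cast at hc ⊢
          linear_combination (-(a : ZMod 4)) * hc
        rw [key]; exact h2
    · right; left
      rw [smul_top_le_iff' _ 1 gen4]
      obtain ⟨c, hc⟩ := inv_mod_four a ha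
      rw [smul_one4] at h
      have h2 := K.smul_mem c h
      rw [smul_one4]
      have key : ((1 * b : ℤ) : ZMod 4) = c • ((a * b : ℤ) : ZMod 4) := by
        rw [zsmul_eq_mul]
        push_cast at hc ⊢
        linear_combination (-(b : ZMod 4)) * hc
      rw [key]; exact h2

lemma genP : ∀ x : ZMod 9 × ZMod 4, ∃ r : ℤ × ℤ, x = r • ((1,1) : ZMod 9 × ZMod 4) := by
  intro x
  refine ⟨((x.1.val : ℤ), (x.2.val : ℤ)), ?_⟩
  show x = ((x.1.val:ℤ) • (1:ZMod 9), (x.2.val:ℤ) • (1:ZMod 4))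
  simp [zsmul_eq_mul, ZMod.natCast_val]

lemma smul_oneP (r : ℤ × ℤ) :
    r • ((1,1) : ZMod 9 × ZMod 4) = ((r.1 : ZMod 9), (r.2 : ZMod 4)) := by
  show (r.1 • (1:ZMod 9), r.2 • (1:ZMod 4)) = _
  rw [smul_one9, smul_one4]

lemma mem_prodSub (N1 : Submodule ℤ (ZMod 9)) (N2 : Submodule ℤ (ZMod 4))
    (x : ZMod 9 × ZMod 4) : x ∈ prodSub N1 N2 ↔ x.1 ∈ N1 ∧ x.2 ∈ N2 := Iff.rfl

lemma mem_span3 {x : ZMod 9} (hx : x ∈ Submodule.span ℤ {(3 : ZMod 9)}) :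
    (3:ℤ) • x = 0 := by
  obtain ⟨n, rfl⟩ := Submodule.mem_span_singleton.mp hx
  rw [smul_comm]
  have : (3:ℤ) • (3 : ZMod 9) = 0 := by rw [zsmul_eq_mul]; decide
  rw [this, smul_zero]

lemma mem_span2 {x : ZMod 4} (hx : x ∈ Submodule.span ℤ {(2 : ZMod 4)}) :
    (2:ℤ) • x = 0 := by
  obtain ⟨n, rfl⟩ := Submodule.mem_span_singleton.mp hx
  rw [smul_comm]
  have : (2:ℤ) • (2 : ZMod 4) = 0 := by rw [zsmul_eq_mul]; decide
  rw [this, smul_zero]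

lemma part3 : ((1, 2) * (3, 1) : ℤ × ℤ) • (⊤ : Submodule (ℤ × ℤ) (ZMod 9 × ZMod 4)) ≤
    prodSub (Submodule.span ℤ {(3 : ZMod 9)}) (Submodule.span ℤ {(2 : ZMod 4)}) := by
  rw [smul_top_le_iff' _ (1,1) genP, smul_oneP]
  refine (mem_prodSub _ _ _).mpr ⟨?_, ?_⟩
  · show (((1,2)*(3,1) : ℤ×ℤ).1 : ZMod 9) ∈ _
    norm_num
  · show (((1,2)*(3,1) : ℤ×ℤ).2 : ZMod 4) ∈ _
    norm_num

lemma part4 (s : ℤ × ℤ) (hs : s ∈ ({n : ℤ | ¬ (3 ∣ n)} ×ˢ {n : ℤ | ¬ (2 ∣ n)} : Set (ℤ × ℤ))) :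
      ¬ ((s * (3, 1)) • (⊤ : Submodule (ℤ × ℤ) (ZMod 9 × ZMod 4)) ≤
          prodSub (Submodule.span ℤ {(3 : ZMod 9)}) (Submodule.span ℤ {(2 : ZMod 4)})) ∧
      ¬ ((s * (1, 2)) • (⊤ : Submodule (ℤ × ℤ) (ZMod 9 × ZMod 4)) ≤
          prodSub (Submodule.span ℤ {(3 : ZMod 9)}) (Submodule.span ℤ {(2 : ZMod 4)})) ∧
      (s * (1, 2) * (3, 1)) • (⊤ : Submodule (ℤ × ℤ) (ZMod 9 × ZMod 4)) ≠ ⊥ := by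
  obtain ⟨s1, s2⟩ := s
  obtain ⟨hs1, hs2⟩ := hs
  simp only [Set.mem_setOf_eq] at hs1 hs2
  refine ⟨?_, ?_, ?_⟩
  · intro hle
    rw [smul_top_le_iff' _ (1,1) genP, Prod.mk_mul_mk, smul_oneP, mem_prodSub] at hle
    have h2 := mem_span2 hle.2
    rw [zsmul_eq_mul] at h2
    have h3 : ((2 * (s2 * 1) : ℤ) : ZMod 4) = 0 := by
      push_cast at h2 ⊢
      linear_combination h2
    rw [ZMod.intCast_zmod_eq_zero_iff_dvd] at h3
    push_cast at h3
    omega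
  · intro hle
    rw [smul_top_le_iff' _ (1,1) genP, Prod.mk_mul_mk, smul_oneP, mem_prodSub] at hle
    have h2 := mem_span3 hle.1
    rw [zsmul_eq_mul] at h2
    have h3 : ((3 * (s1 * 1) : ℤ) : ZMod 9) = 0 := by
      push_cast at h2 ⊢
      linear_combination h2
    rw [ZMod.intCast_zmod_eq_zero_iff_dvd] at h3
    push_cast at h3
    omega
  · intro heq
    rw [smul_top_eq_bot_iff' _ (1,1) genP, Prod.mk_mul_mk, Prod.mk_mul_mk, smul_oneP,
      Prod.mk_eq_zero] at heq
    have h1 := heq.1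
    rw [ZMod.intCast_zmod_eq_zero_iff_dvd] at h1
    omega

theorem stmt19 :
    IsS2AbsorbingSecond {n : ℤ | ¬ (3 ∣ n)} (⊤ : Submodule ℤ (ZMod 9)) ∧
    IsS2AbsorbingSecond {n : ℤ | ¬ (2 ∣ n)} (⊤ : Submodule ℤ (ZMod 4)) ∧
    (((1, 2) * (3, 1) : ℤ × ℤ) • (⊤ : Submodule (ℤ × ℤ) (ZMod 9 × ZMod 4)) ≤
      prodSub (Submodule.span ℤ {(3 : ZMod 9)}) (Submodule.span ℤ {(2 : ZMod 4)})) ∧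
    (∀ s ∈ ({n : ℤ | ¬ (3 ∣ n)} ×ˢ {n : ℤ | ¬ (2 ∣ n)} : Set (ℤ × ℤ)),
      ¬ ((s * (3, 1)) • (⊤ : Submodule (ℤ × ℤ) (ZMod 9 × ZMod 4)) ≤
          prodSub (Submodule.span ℤ {(3 : ZMod 9)}) (Submodule.span ℤ {(2 : ZMod 4)})) ∧
      ¬ ((s * (1, 2)) • (⊤ : Submodule (ℤ × ℤ) (ZMod 9 × ZMod 4)) ≤
          prodSub (Submodule.span ℤ {(3 : ZMod 9)}) (Submodule.span ℤ {(2 : ZMod 4)})) ∧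
      (s * (1, 2) * (3, 1)) • (⊤ : Submodule (ℤ × ℤ) (ZMod 9 × ZMod 4)) ≠ ⊥) ∧
    ¬ IsS2AbsorbingSecond ({n : ℤ | ¬ (3 ∣ n)} ×ˢ {n : ℤ | ¬ (2 ∣ n)})
        (⊤ : Submodule (ℤ × ℤ) (ZMod 9 × ZMod 4)) := by
  refine ⟨zmod9_second, zmod4_second, part3, part4, ?_⟩
  rintro ⟨-, s, hs, h⟩
  obtain ⟨h1, h2, h3⟩ := part4 s hs
  rcases h (1,2) (3,1) _ part3 with h' | h' | h'
  · exact h2 h'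
  · exact h1 h'
  · rw [← mul_assoc] at h'
    exact h3 h'
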